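/- arXiv:1601.04743 — 2 statements merged into one kernel-verified Lean document; each statement's English description precedes it below -/
import Mathlib

section
/- Let Q be the arithmetization of a quantified Boolean suffix in which each ∃xᵢ is replaced by a sum over xᵢ ∈ {0,1} and each ∀xᵢ by a product over xᵢ ∈ {0,1}, applied to a polynomial P that is {0,1}-valued on Boolean inputs. Then for every Boolean assignment a to the free variables, Q(a) ≠ 0 over ℤ if and only if the quantified Boolean formula is true at a. -/
/-- Arithmetization of a quantifier suffix: each existential quantifier (`q _ = false`)
becomes a sum over {0,1}, each universal quantifier (`q _ = true`) becomes a product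
over {0,1}. -/
def quantEval : (t : ℕ) → (Fin t → Bool) → ((Fin t → Bool) → ℤ) → ℤ
  | 0, _, f => f (fun i => i.elim0)
  | t + 1, q, f =>
    if q 0 then
      quantEval t (fun i => q i.succ) (fun v => f (Fin.cons false v)) *
        quantEval t (fun i => q i.succ) (fun v => f (Fin.cons true v))
    else
      quantEval t (fun i => q i.succ) (fun v => f (Fin.cons false v)) +
        quantEval t (fun i => q i.succ) (fun v => f (Fin.cons true v))

/-- Truth value of a quantified Boolean suffix over a Boolean predicate. -/
def quantTruth : (t : ℕ) → (Fin t → Bool) → ((Fin t → Bool) → Prop) → Prop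
  | 0, _, f => f (fun i => i.elim0)
  | t + 1, q, f =>
    if q 0 then
      quantTruth t (fun i => q i.succ) (fun v => f (Fin.cons false v)) ∧
        quantTruth t (fun i => q i.succ) (fun v => f (Fin.cons true v))
    else
      quantTruth t (fun i => q i.succ) (fun v => f (Fin.cons false v)) ∨
        quantTruth t (fun i => q i.succ) (fun v => f (Fin.cons true v))

/-! Over nonnegative integers a sum vanishes iff both summands do and a product vanishes iff
one factor does, so the arithmetization of a nonnegative `f` is nonzero exactly when the
quantified formula holds for the predicate `f v ≠ 0`, which is `f v = 1` when `f` is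
`{0,1}`-valued. -/

theorem quantEval_nonneg : ∀ (t : ℕ) (q : Fin t → Bool) (f : (Fin t → Bool) → ℤ),
    (∀ v, 0 ≤ f v) → 0 ≤ quantEval t q f
  | 0, _, f, hf => hf _
  | t + 1, q, f, hf => by
    have h₀ := quantEval_nonneg t (fun i => q i.succ) (f <| Fin.cons false ·) fun _ => hf _
    have h₁ := quantEval_nonneg t (fun i => q i.succ) (f <| Fin.cons true ·) fun _ => hf _
    unfold quantEval
    split
    · exact mul_nonneg h₀ h₁
    · exact add_nonneg h₀ h₁

theorem quantEval_ne_zero_iff : ∀ (t : ℕ) (q : Fin t → Bool) (f : (Fin t → Bool) → ℤ),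
    (∀ v, 0 ≤ f v) → (quantEval t q f ≠ 0 ↔ quantTruth t q (fun v => f v ≠ 0))
  | 0, _, _, _ => Iff.rfl
  | t + 1, q, f, hf => by
    let f₀ := fun v => f (Fin.cons false v)
    let f₁ := fun v => f (Fin.cons true v)
    have ih₀ := quantEval_ne_zero_iff t (fun i => q i.succ) f₀ fun _ => hf _
    have ih₁ := quantEval_ne_zero_iff t (fun i => q i.succ) f₁ fun _ => hf _
    have h₀ := quantEval_nonneg t (fun i => q i.succ) f₀ fun _ => hf _
    have h₁ := quantEval_nonneg t (fun i => q i.succ) f₁ fun _ => hf _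
    unfold quantEval quantTruth
    split
    · rw [mul_ne_zero_iff, ih₀, ih₁]
    · rw [← ih₀, ← ih₁, ne_eq, add_eq_zero_iff_of_nonneg h₀ h₁, not_and_or]

theorem stmt_15 (m t : ℕ) (P : MvPolynomial (Fin (m + t)) ℤ)
    (hP : ∀ b : Fin (m + t) → Bool,
      MvPolynomial.eval (fun i => if b i then (1 : ℤ) else 0) P = 0 ∨
      MvPolynomial.eval (fun i => if b i then (1 : ℤ) else 0) P = 1)
    (q : Fin t → Bool) (a : Fin m → Bool) :
    quantEval t q (fun v =>
        MvPolynomial.eval (fun i => if Fin.append a v i then (1 : ℤ) else 0) P) ≠ 0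
      ↔
    quantTruth t q (fun v =>
        MvPolynomial.eval (fun i => if Fin.append a v i then (1 : ℤ) else 0) P = 1) := by
  have hbool (v : Fin t → Bool) := hP (Fin.append a v)
  rw [quantEval_ne_zero_iff t q _ fun v => by rcases hbool v with h | h <;> simp [h]]
  congr! 2 with v
  rcases hbool v with h | h <;> simp [h]
end

section
/- Ryser's formula: for an n×n matrix M over a commutative ring, the permanent of M equals Σ over S ⊆ [n] of (−1)^{n−|S|} ∏_{i=1}^n ( Σ_{j ∈ S} M[i][j] ). -/
/-!
Expanding `∏ i, ∑ j ∈ S, M i j` gives the sum of `∏ i, M i (f i)` over all maps `f` with image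
in `S`. Exchanging the sums, each `f` is weighted by `∑ S ⊇ image f, (-1) ^ #Sᶜ`, which is the
alternating sum over the subsets of the complement of `image f`: it vanishes unless `f` is
surjective, i.e. a permutation, in which case it is `1`.
-/

open Finset Equiv

lemma Finset.sum_superset_neg_one_pow_card_compl {R α : Type*} [Ring R] [Fintype α]
    [DecidableEq α] (T : Finset α) :
    ∑ S with T ⊆ S, (-1 : R) ^ #Sᶜ = if T = univ then 1 else 0 := by
  have h : ∑ U ∈ Tᶜ.powerset, (-1 : R) ^ #U = if Tᶜ = ∅ then 1 else 0 := by
    exact_mod_cast congrArg (Int.cast : ℤ → R) sum_powerset_neg_one_pow_card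
  simp only [compl_eq_empty_iff] at h
  rw [← h]
  refine sum_nbij' compl compl ?_ ?_ (fun _ _ => compl_compl _) (fun _ _ => compl_compl _)
    (fun _ _ => rfl) <;> simp [subset_compl_comm]

lemma Finset.prod_sum_eq_sum_image_subset {R ι α : Type*} [CommSemiring R] [Fintype ι]
    [Fintype α] [DecidableEq ι] [DecidableEq α] (M : ι → α → R) (S : Finset α) :
    ∏ i, ∑ j ∈ S, M i j = ∑ f : ι → α with univ.image f ⊆ S, ∏ i, M i (f i) := by
  rw [prod_univ_sum]
  congr 1
  ext f
  simp [Fintype.mem_piFinset, image_subset_iff]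

lemma Equiv.Perm.sum_coe_eq_sum_surjective {α M : Type*} [Fintype α] [DecidableEq α]
    [AddCommMonoid M] (g : (α → α) → M) :
    ∑ σ : Perm α, g σ = ∑ f : α → α with f.Surjective, g f :=
  sum_bij (fun σ _ => ⇑σ) (fun σ _ => by simp [σ.surjective])
    (fun _ _ _ _ h => DFunLike.coe_injective h)
    (fun f hf => ⟨ofBijective f (Finite.surjective_iff_bijective.mp (mem_filter.mp hf).2),
      mem_univ _, rfl⟩)
    (fun _ _ => rfl)

theorem Matrix.sum_perm_prod_eq_ryser {R n : Type*} [CommRing R] [Fintype n] [DecidableEq n]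
    (M : Matrix n n R) :
    ∑ σ : Perm n, ∏ i, M i (σ i)
      = ∑ S : Finset n, (-1 : R) ^ (Fintype.card n - #S) * ∏ i, ∑ j ∈ S, M i j := by
  have image_eq_univ (f : n → n) : univ.image f = univ ↔ f.Surjective := by
    simp [eq_univ_iff_forall, Function.Surjective]
  calc ∑ σ : Perm n, ∏ i, M i (σ i)
      = ∑ f : n → n, (if univ.image f = univ then 1 else 0) * ∏ i, M i (f i) := by
        rw [Perm.sum_coe_eq_sum_surjective fun f => ∏ i, M i (f i)]
        simp_rw [image_eq_univ, boole_mul, ← sum_filter]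
    _ = ∑ f : n → n, ∑ S : Finset n,
          if univ.image f ⊆ S then (-1 : R) ^ #Sᶜ * ∏ i, M i (f i) else 0 := by
        simp_rw [← sum_superset_neg_one_pow_card_compl (R := R), sum_filter, sum_mul, ite_mul,
          zero_mul]
    _ = ∑ S : Finset n, (-1 : R) ^ (Fintype.card n - #S) * ∏ i, ∑ j ∈ S, M i j := by
        rw [sum_comm]
        simp_rw [prod_sum_eq_sum_image_subset M, mul_sum, sum_filter, card_compl]

theorem stmt_17 (R : Type*) [CommRing R] (n : ℕ) (M : Matrix (Fin n) (Fin n) R) :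
    (∑ σ : Equiv.Perm (Fin n), ∏ i, M i (σ i))
      = ∑ S : Finset (Fin n), (-1 : R) ^ (n - S.card) * ∏ i, ∑ j ∈ S, M i j := by
  simpa using M.sum_perm_prod_eq_ryser
end
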